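/- Let G = (V,E) be a finite simple graph with at least one edge, with n(G) vertices, m(G) edges, k(G) components and c(G) covered components, and let C(G) = C(G,x,y,z) be its covered components polynomial. Then the number of vertices of G of degree 1 equals [x^{k(G)+1} y^{m(G)−1} z^{c(G)}]C(G) + 2·[x^{k(G)+1} y^{m(G)−1} z^{c(G)−1}]C(G). -/

import Mathlib

open MvPolynomial Finset
open scoped Classical

noncomputable section

variable {V : Type}

/-- The (finite) edge set of a simple graph on a finite vertex type, as a `Finset`. -/
def edgeFinset' [Fintype V] (G : SimpleGraph V) : Finset (Sym2 V) :=
  (Set.toFinite G.edgeSet).toFinset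

/-- `k(G)`: the number of connected components of `G`. -/
def kG (G : SimpleGraph V) : ℕ := Nat.card G.ConnectedComponent

/-- `c(G)`: the number of covered components of `G`, i.e. connected components
containing at least one edge. -/
def cG (G : SimpleGraph V) : ℕ :=
  Nat.card {c : G.ConnectedComponent // ∃ v w, G.Adj v w ∧ G.connectedComponentMk v = c}

/-- The covered components polynomial
`C(G,x,y,z) = ∑_{A ⊆ E} x^{k(⟨A⟩)} y^{|A|} z^{c(⟨A⟩)}` of a finite simple graph, where
`⟨A⟩` denotes the spanning subgraph with edge set `A`, and `x = X 0`, `y = X 1`,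
`z = X 2`. -/
def ccp [Fintype V] (G : SimpleGraph V) : MvPolynomial (Fin 3) ℤ :=
  ∑ A ∈ (edgeFinset' G).powerset,
    X 0 ^ kG (SimpleGraph.fromEdgeSet (A : Set (Sym2 V))) * X 1 ^ A.card *
      X 2 ^ cG (SimpleGraph.fromEdgeSet (A : Set (Sym2 V)))

/-- `[x^i y^j z^k] P`: the coefficient of the monomial `x^i y^j z^k`. -/
def coeff3 (P : MvPolynomial (Fin 3) ℤ) (i j k : ℕ) : ℤ :=
  MvPolynomial.coeff (Finsupp.single 0 i + Finsupp.single 1 j + Finsupp.single 2 k) P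

/-- The degree of the vertex `v` in `G`. -/
def degN (G : SimpleGraph V) (v : V) : ℕ := Nat.card {w : V // G.Adj v w}

/-!
Write `i(H)` for the number of isolated vertices of `H`. The uncovered components are exactly the
isolated vertices, so `c(H) + i(H) = k(H)`. Deleting an edge `e` raises `i` by the number `ε(e)`
of endpoints of `e` of degree one, and if `ε(e) > 0` the edge is a bridge, so `k` rises by one.
Hence among the `(m-1)`-edge subgraphs `G - e` with `k(G - e) = k(G) + 1`, those with
`c(G - e) = c(G)` are the ones with `ε(e) = 1` and those with `c(G - e) = c(G) - 1` the ones with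
`ε(e) = 2`, and `∑ₑ ε(e)` counts every vertex of degree one exactly once.
-/

lemma Finset.sum_powersetCard_card_sub_one {α M : Type*} [DecidableEq α] [AddCommMonoid M]
    {s : Finset α} (hs : s.Nonempty) (f : Finset α → M) :
    ∑ A ∈ s.powersetCard (#s - 1), f A = ∑ a ∈ s, f (s.erase a) := by
  have hs := hs.card_pos
  symm
  refine sum_bij (fun a _ => s.erase a) (fun a ha => ?_) (fun a ha b _ => (erase_inj s ha).mp)
    (fun A hA => ?_) (fun _ _ => rfl)
  · exact mem_powersetCard.mpr ⟨erase_subset a s, card_erase_of_mem ha⟩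
  · obtain ⟨hAs, hA⟩ := mem_powersetCard.mp hA
    obtain ⟨a, ha⟩ := card_eq_one.mp (by rw [card_sdiff_of_subset hAs]; omega : #(s \ A) = 1)
    refine ⟨a, (mem_sdiff.mp (ha ▸ mem_singleton_self a)).1, ?_⟩
    rw [erase_eq, ← ha, sdiff_sdiff_eq_self hAs]

namespace SimpleGraph

variable {G : SimpleGraph V} {e : Sym2 V} {u v w : V}

lemma IsIsolated.eq_of_reachable (hv : G.IsIsolated v) (h : G.Reachable v w) : v = w := by
  by_contra hne
  exact (G.mem_support_iff_not_isIsolated.mp (mem_support_of_reachable hne h)) hv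

lemma degree_eq_one_iff_forall_adj_eq [Fintype (G.neighborSet v)] (hvu : G.Adj v u) :
    G.degree v = 1 ↔ ∀ w, G.Adj v w → w = u := by
  rw [← card_neighborFinset_eq_degree, card_eq_one]
  constructor
  · rintro ⟨x, hx⟩ w hvw
    have hw : w ∈ G.neighborFinset v := (mem_neighborFinset _ _ _).mpr hvw
    have hu : u ∈ G.neighborFinset v := (mem_neighborFinset _ _ _).mpr hvu
    rw [hx, mem_singleton] at hw hu
    rw [hw, hu]
  · intro h
    exact ⟨u, eq_singleton_iff_unique_mem.mpr
      ⟨(mem_neighborFinset _ _ _).mpr hvu, fun w hw => h w ((mem_neighborFinset _ _ _).mp hw)⟩⟩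

section Leaf

variable (hleaf : ∀ w, G.Adj v w → w = u)
include hleaf

lemma isIsolated_deleteEdges_of_leaf : (G.deleteEdges {s(v, u)}).IsIsolated v := by
  intro w hw
  rw [deleteEdges_adj] at hw
  exact hw.2 (by rw [hleaf w hw.1, Set.mem_singleton_iff])

variable (hvu : G.Adj v u)
include hvu

/-- Folding the leaf `v` onto its neighbour `u` maps walks of `G` to walks avoiding `s(v, u)`. -/
lemma Reachable.deleteEdges_of_leaf {x y : V} (h : G.Reachable x y) :
    (G.deleteEdges {s(v, u)}).Reachable (Function.update id v u x) (Function.update id v u y) := by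
  rw [reachable_iff_reflTransGen] at h ⊢
  refine Relation.ReflTransGen.lift' _ (fun x y hxy => ?_) _ _ h
  simp only [Function.onFun]
  by_cases hx : x = v
  · rw [hx, hleaf y (hx ▸ hxy), Function.update_self, Function.update_of_ne hvu.ne', id]
  by_cases hy : y = v
  · rw [hy, hleaf x (hy ▸ hxy.symm), Function.update_self, Function.update_of_ne hvu.ne', id]
  rw [Function.update_of_ne hx, Function.update_of_ne hy]
  refine Relation.ReflTransGen.single ((deleteEdges_adj ..).mpr ⟨hxy, fun h => ?_⟩)
  rcases Sym2.eq_iff.mp (Set.mem_singleton_iff.mp h) with ⟨rfl, -⟩ | ⟨-, rfl⟩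
  exacts [hx rfl, hy rfl]

theorem natCard_connectedComponent_deleteEdges_of_leaf [Finite V] :
    Nat.card (G.deleteEdges {s(v, u)}).ConnectedComponent = Nat.card G.ConnectedComponent + 1 := by
  set H := G.deleteEdges {s(v, u)}
  have hfold_ne : ∀ x, Function.update id v u x ≠ v := fun x => by
    by_cases hx : x = v
    · rw [hx, Function.update_self]; exact hvu.ne'
    · rwa [Function.update_of_ne hx]
  have hfold_reach : ∀ x, G.Reachable (Function.update id v u x) x := fun x => by
    by_cases hx : x = v
    · rw [hx, Function.update_self]; exact hvu.symm.reachable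
    · rw [Function.update_of_ne hx, id]
  let f : {C : H.ConnectedComponent // C ≠ H.connectedComponentMk v} → G.ConnectedComponent :=
    fun C => C.1.map (Hom.ofLE (deleteEdges_le _))
  have hf : f.Bijective := by
    constructor
    · rintro ⟨C, hC⟩ ⟨D, hD⟩ hCD
      obtain ⟨x, rfl⟩ := C.exists_rep
      obtain ⟨y, rfl⟩ := D.exists_rep
      have hx : x ≠ v := by rintro rfl; exact hC rfl
      have hy : y ≠ v := by rintro rfl; exact hD rfl
      change G.connectedComponentMk x = G.connectedComponentMk y at hCD
      have := (ConnectedComponent.exact hCD).deleteEdges_of_leaf hleaf hvu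
      rw [Function.update_of_ne hx, Function.update_of_ne hy] at this
      exact Subtype.ext (ConnectedComponent.sound this)
    · intro D
      obtain ⟨x, rfl⟩ := D.exists_rep
      refine ⟨⟨H.connectedComponentMk (Function.update id v u x), fun h => hfold_ne x ?_⟩,
        ConnectedComponent.sound (hfold_reach x)⟩
      exact ((isIsolated_deleteEdges_of_leaf hleaf).eq_of_reachable
        (ConnectedComponent.exact h).symm).symm
  calc Nat.card H.ConnectedComponent
      = Nat.card (Option {C : H.ConnectedComponent // C ≠ H.connectedComponentMk v}) :=
        Nat.card_congr (Equiv.optionSubtypeNe _).symm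
    _ = Nat.card G.ConnectedComponent + 1 := by
        rw [Finite.card_option, Nat.card_congr (Equiv.ofBijective f hf)]

end Leaf

lemma isIsolated_deleteEdges_iff [Fintype V] (he : e ∈ G.edgeSet) :
    (G.deleteEdges {e}).IsIsolated v ↔ G.IsIsolated v ∨ (G.degree v = 1 ∧ v ∈ e) := by
  by_cases hv : v ∈ e
  · obtain ⟨u, rfl⟩ := Sym2.mem_iff_exists.mp hv
    have hvu : G.Adj v u := he
    simp only [IsIsolated, deleteEdges_adj, Set.mem_singleton_iff, Sym2.congr_right,
      degree_eq_one_iff_forall_adj_eq hvu, hv, and_true, not_and, not_not]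
    exact ⟨Or.inr, fun h => h.elim (fun h => (h u hvu).elim) id⟩
  · have hne : ∀ w, s(v, w) ≠ e := fun w h => hv (h ▸ Sym2.mem_mk_left v w)
    simp [IsIsolated, deleteEdges_adj, hne, hv]

lemma card_isIsolated_deleteEdges [Fintype V] (he : e ∈ G.edgeSet) :
    #{v | (G.deleteEdges {e}).IsIsolated v} =
      #{v | G.IsIsolated v} + #{v | G.degree v = 1 ∧ v ∈ e} := by
  simp_rw [isIsolated_deleteEdges_iff he]
  rw [filter_or, card_union_of_disjoint]
  refine disjoint_filter.mpr fun v _ hiso hdeg => ?_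
  obtain ⟨w, hw⟩ := (G.degree_pos_iff_exists_adj v).mp (by omega)
  exact hiso w hw

end SimpleGraph

open SimpleGraph

lemma degN_eq_degree [Fintype V] (G : SimpleGraph V) (v : V) : degN G v = G.degree v := by
  rw [degN, ← card_neighborSet_eq_degree, ← Nat.card_eq_fintype_card]
  rfl

lemma edgeFinset'_eq [Fintype V] (G : SimpleGraph V) : edgeFinset' G = G.edgeFinset := by
  ext e
  simp [edgeFinset']

lemma cG_pos [Finite V] {G : SimpleGraph V} {e : Sym2 V} (he : e ∈ G.edgeSet) : 0 < cG G := by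
  induction e using Sym2.ind with
  | _ a b => exact Nat.card_pos_iff.mpr ⟨⟨⟨_, a, b, he, rfl⟩⟩, inferInstance⟩

lemma cG_add_card_isIsolated [Fintype V] (H : SimpleGraph V) :
    cG H + #{v | H.IsIsolated v} = kG H := by
  set P := fun C : H.ConnectedComponent => ∃ v w, H.Adj v w ∧ H.connectedComponentMk v = C
  have hnotP : ∀ v, H.IsIsolated v → ¬ P (H.connectedComponentMk v) := by
    rintro v hv ⟨x, y, hxy, hx⟩
    rw [← hv.eq_of_reachable (ConnectedComponent.exact hx).symm] at hxy
    exact hv y hxy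
  let f : {v // H.IsIsolated v} → {C // ¬ P C} := fun v => ⟨_, hnotP v v.2⟩
  have hf : f.Bijective := by
    constructor
    · rintro ⟨v, hv⟩ ⟨w, hw⟩ h
      exact Subtype.ext (hv.eq_of_reachable (ConnectedComponent.exact (congrArg Subtype.val h)))
    · rintro ⟨C, hC⟩
      obtain ⟨v, rfl⟩ := C.exists_rep
      exact ⟨⟨v, fun w hvw => hC ⟨v, w, hvw, rfl⟩⟩, rfl⟩
  rw [← Fintype.card_subtype, ← Nat.card_eq_fintype_card, Nat.card_congr (Equiv.ofBijective f hf),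
    cG, kG, ← Nat.card_sum, Nat.card_congr (Equiv.sumCompl P)]

lemma ite_kG_cG_deleteEdges_eq_card_degree_eq_one_mem [Fintype V] {G : SimpleGraph V} {e : Sym2 V}
    (he : e ∈ G.edgeSet) :
    (if kG (G.deleteEdges {e}) = kG G + 1 ∧ cG (G.deleteEdges {e}) = cG G then 1 else 0) +
      2 * (if kG (G.deleteEdges {e}) = kG G + 1 ∧ cG (G.deleteEdges {e}) = cG G - 1
        then 1 else 0) =
      #{v | G.degree v = 1 ∧ v ∈ e} := by
  have hG := cG_add_card_isIsolated G
  have hH := cG_add_card_isIsolated (G.deleteEdges {e})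
  have hiso := card_isIsolated_deleteEdges he
  -- rules out `cG G - 1 = cG G` under truncated subtraction
  have hc := cG_pos he
  have hle : #{v | G.degree v = 1 ∧ v ∈ e} ≤ 2 := by
    induction e using Sym2.ind with
    | _ a b =>
      calc #{v | G.degree v = 1 ∧ v ∈ s(a, b)} ≤ #{a, b} :=
            card_le_card fun v hv => by simpa using (mem_filter.mp hv).2.2
        _ ≤ 2 := card_le_two
  have hk : 0 < #{v | G.degree v = 1 ∧ v ∈ e} → kG (G.deleteEdges {e}) = kG G + 1 := by
    intro hpos
    obtain ⟨v, hv⟩ := card_pos.mp hpos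
    obtain ⟨hdeg, hve⟩ := (mem_filter.mp hv).2
    obtain ⟨u, rfl⟩ := Sym2.mem_iff_exists.mp hve
    exact natCard_connectedComponent_deleteEdges_of_leaf
      ((degree_eq_one_iff_forall_adj_eq he).mp hdeg) he
  split_ifs <;> omega

lemma card_degree_eq_one_eq_sum_edgeFinset [Fintype V] (G : SimpleGraph V) :
    #{v | G.degree v = 1} = ∑ e ∈ G.edgeFinset, #{v | G.degree v = 1 ∧ v ∈ e} := by
  have := sum_card_bipartiteAbove_eq_sum_card_bipartiteBelow (s := G.edgeFinset)
    (t := {v | G.degree v = 1}) (r := fun e v => v ∈ e)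
  simp only [bipartiteAbove, bipartiteBelow, filter_filter] at this
  rw [this, card_eq_sum_ones]
  refine sum_congr rfl fun v hv => ?_
  rw [← incidenceFinset_eq_filter, card_incidenceFinset_eq_degree, (mem_filter.mp hv).2]

lemma single_add_single_add_single_inj {i j k i' j' k' : ℕ} :
    (Finsupp.single (0 : Fin 3) i + Finsupp.single 1 j + Finsupp.single 2 k =
      Finsupp.single 0 i' + Finsupp.single 1 j' + Finsupp.single 2 k') ↔
      i = i' ∧ j = j' ∧ k = k' := by
  constructor
  · intro h
    have := DFunLike.congr_fun h
    exact ⟨by simpa using this 0, by simpa using this 1, by simpa using this 2⟩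
  · rintro ⟨rfl, rfl, rfl⟩
    rfl

lemma coeff3_X_pow_mul (i j k i' j' k' : ℕ) :
    coeff3 (X 0 ^ i * X 1 ^ j * X 2 ^ k) i' j' k' = if i = i' ∧ j = j' ∧ k = k' then 1 else 0 := by
  rw [coeff3, X_pow_eq_monomial, X_pow_eq_monomial, X_pow_eq_monomial, monomial_mul, monomial_mul,
    coeff_monomial, one_mul, one_mul]
  exact if_congr single_add_single_add_single_inj rfl rfl

lemma coeff3_ccp_card_sub_one [Fintype V] {G : SimpleGraph V} (hE : G.edgeFinset.Nonempty)
    (i t : ℕ) :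
    coeff3 (ccp G) i (#G.edgeFinset - 1) t = ∑ e ∈ G.edgeFinset,
      if kG (G.deleteEdges {e}) = i ∧ cG (G.deleteEdges {e}) = t then 1 else 0 := by
  have hterm : ∀ A : Finset (Sym2 V),
      coeff3 (X 0 ^ kG (fromEdgeSet (A : Set (Sym2 V))) * X 1 ^ #A *
        X 2 ^ cG (fromEdgeSet (A : Set (Sym2 V)))) i (#G.edgeFinset - 1) t =
      if #A = #G.edgeFinset - 1 then
        if kG (fromEdgeSet (A : Set (Sym2 V))) = i ∧ cG (fromEdgeSet (A : Set (Sym2 V))) = t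
        then 1 else 0
      else 0 := fun A => by
    rw [coeff3_X_pow_mul]
    split_ifs <;> tauto
  have hdel : ∀ e, fromEdgeSet ((G.edgeFinset.erase e : Finset (Sym2 V)) : Set (Sym2 V)) =
      G.deleteEdges {e} := fun e => by
    rw [coe_erase, coe_edgeFinset, ← deleteEdges_fromEdgeSet, fromEdgeSet_edgeSet]
  rw [coeff3, ccp, coeff_sum]
  refine (sum_congr (by rw [edgeFinset'_eq]) fun A _ => hterm A).trans ?_
  rw [← sum_filter, ← powersetCard_eq_filter, sum_powersetCard_card_sub_one hE]
  simp only [hdel]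

/-- Let `G` be a finite simple graph with at least one edge.  Then the
number of vertices of degree `1` equals
`[x^{k(G)+1} y^{m(G)−1} z^{c(G)}]C(G) + 2·[x^{k(G)+1} y^{m(G)−1} z^{c(G)−1}]C(G)`. -/
theorem ccp_degree_one_count {V : Type} [Fintype V] (G : SimpleGraph V)
    (h : 0 < (edgeFinset' G).card) :
    (Nat.card {v : V // degN G v = 1} : ℤ) =
      coeff3 (ccp G) (kG G + 1) ((edgeFinset' G).card - 1) (cG G) +
      2 * coeff3 (ccp G) (kG G + 1) ((edgeFinset' G).card - 1) (cG G - 1) := by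
  have hE : G.edgeFinset.Nonempty := by rwa [edgeFinset'_eq, card_pos] at h
  rw [edgeFinset'_eq, coeff3_ccp_card_sub_one hE, coeff3_ccp_card_sub_one hE, mul_sum,
    ← sum_add_distrib, Nat.card_eq_fintype_card, Fintype.card_subtype]
  simp_rw [degN_eq_degree]
  rw [card_degree_eq_one_eq_sum_edgeFinset]
  push_cast
  refine sum_congr rfl fun e he => ?_
  exact_mod_cast (ite_kG_cG_deleteEdges_eq_card_degree_eq_one_mem (mem_edgeFinset.mp he)).symm
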